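/- Let d ≥ 1, κ ≥ 2d, let α : ℝ^{2d} → ℂ be measurable with ‖α‖_{A^{κ,2}} < ∞, let t ≥ 0 and D ≥ 0, and let Ψ : ℝ^{2d} → ℝ^{2d} be a measurable map satisfying |Ψ(x,v) − (x − t v, v)| ≤ D for all (x,v) ∈ ℝ^{2d}. Then ‖α ∘ Ψ‖_{A^{κ,2}} ≤ (1 + t + D)^{κ/2} ‖α‖_{A^{κ,2}}. -/

import Mathlib

open MeasureTheory
open scoped ENNReal NNReal

/-- `ℝ^d` as a Euclidean space. -/
abbrev E (d : ℕ) : Type := EuclideanSpace ℝ (Fin d)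

/-- The `A^{κ,p}` norm: `sup_{R ≥ 0} (1+R)^{-κ/p} (∫ sup_{|z̄| ≤ R} ‖f(z+z̄)‖^p dz)^{1/p}`. -/
noncomputable def Anorm {G F : Type*} [NormedAddCommGroup G] [MeasureSpace G]
    [NormedAddCommGroup F] (κ p : ℝ) (f : G → F) : ℝ≥0∞ :=
  ⨆ R : NNReal, (ENNReal.ofReal (1 + (R : ℝ))) ^ (-(κ / p)) *
    (∫⁻ z, ⨆ w ∈ Metric.closedBall (0 : G) (R : ℝ),
      ENNReal.ofReal (‖f (z + w)‖ ^ p)) ^ (1 / p)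

/-!
For `|w| ≤ R` the point `Ψ (z + w)` lies within `(1 + t) R + D` of `T z`, where `T` is the
backward free flow, because `T` is linear with `|T w| ≤ (1 + t) |w|`. So the supremum of `|α ∘ Ψ|²`
over the `R`-ball around `z` is dominated by the supremum of `|α|²` over the `R'`-ball around `T z`,
`R' = (1 + t) R + D`. As `T` is a measure-preserving shear, integrating in `z` yields the `R'`-term
of `‖α‖_{A^{κ,2}}`, and the weights compare through `1 + R' ≤ (1 + t + D) (1 + R)`.
-/

open Metric

section BallSup

variable {G F : Type*} [NormedAddCommGroup G] [NormedAddCommGroup F]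

noncomputable def ballSupPow (p R : ℝ) (f : G → F) (z : G) : ℝ≥0∞ :=
  ⨆ w ∈ closedBall (0 : G) R, ENNReal.ofReal (‖f (z + w)‖ ^ p)

theorem Anorm_eq_iSup_ballSupPow [MeasureSpace G] (κ p : ℝ) (f : G → F) :
    Anorm κ p f = ⨆ R : ℝ≥0, ENNReal.ofReal (1 + R) ^ (-(κ / p)) *
      (∫⁻ z, ballSupPow p R f z) ^ (1 / p) :=
  rfl

theorem ballSupPow_comp_le {p R R' : ℝ} {f : G → F} {Ψ : G → G} {z y : G}
    (hΨ : ∀ w ∈ closedBall (0 : G) R, Ψ (z + w) - y ∈ closedBall (0 : G) R') :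
    ballSupPow p R (f ∘ Ψ) z ≤ ballSupPow p R' f y :=
  iSup₂_le fun w hw => by
    have h := le_iSup₂ (f := fun w (_ : w ∈ closedBall (0 : G) R') =>
      ENNReal.ofReal (‖f (y + w)‖ ^ p)) (Ψ (z + w) - y) (hΨ w hw)
    rwa [add_sub_cancel] at h

theorem lintegral_ballSupPow_comp_le [MeasureSpace G] {p R R' : ℝ} {f : G → F} {Ψ T : G → G}
    (hT : MeasurePreserving T) (hTe : MeasurableEmbedding T)
    (hΨ : ∀ z, ∀ w ∈ closedBall (0 : G) R, Ψ (z + w) - T z ∈ closedBall (0 : G) R') :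
    ∫⁻ z, ballSupPow p R (f ∘ Ψ) z ≤ ∫⁻ z, ballSupPow p R' f z :=
  calc ∫⁻ z, ballSupPow p R (f ∘ Ψ) z ≤ ∫⁻ z, ballSupPow p R' f (T z) :=
        lintegral_mono fun z => ballSupPow_comp_le (hΨ z)
    _ = ∫⁻ z, ballSupPow p R' f z := hT.lintegral_comp_emb hTe _

end BallSup

theorem ENNReal.ofReal_rpow_neg_le_mul {a b c s : ℝ} (ha : 0 < a) (hb : 0 < b)
    (hba : b ≤ c * a) (hs : 0 ≤ s) :
    ENNReal.ofReal a ^ (-s) ≤ ENNReal.ofReal (c ^ s) * ENNReal.ofReal b ^ (-s) := by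
  have hc : 0 < c := pos_of_mul_pos_left (hb.trans_le hba) ha.le
  rw [ENNReal.ofReal_rpow_of_pos ha, ENNReal.ofReal_rpow_of_pos hb,
    ← ENNReal.ofReal_mul (by positivity)]
  refine ENNReal.ofReal_le_ofReal ?_
  calc a ^ (-s) ≤ (b / c) ^ (-s) :=
        Real.rpow_le_rpow_of_nonpos (by positivity) ((div_le_iff₀' hc).2 hba) (neg_nonpos.2 hs)
    _ = c ^ s * b ^ (-s) := by
        rw [Real.div_rpow hb.le hc.le, Real.rpow_neg hc.le, div_inv_eq_mul, mul_comm]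

theorem Anorm_comp_le_of_norm_sub_le {G F : Type*} [NormedAddCommGroup G] [MeasureSpace G]
    [NormedAddCommGroup F] {κ p L D : ℝ} (hκ : 0 ≤ κ) (hp : 0 ≤ p) (hL : 1 ≤ L) (hD : 0 ≤ D)
    (f : G → F) {Ψ T : G → G} (hT : MeasurePreserving T) (hTe : MeasurableEmbedding T)
    (hΨ : ∀ z w, ‖Ψ (z + w) - T z‖ ≤ L * ‖w‖ + D) :
    Anorm κ p (f ∘ Ψ) ≤ ENNReal.ofReal ((L + D) ^ (κ / p)) * Anorm κ p f := by
  rw [Anorm_eq_iSup_ballSupPow, Anorm_eq_iSup_ballSupPow]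
  refine iSup_le fun R => ?_
  let R' : ℝ≥0 := ⟨L * R + D, by positivity⟩
  have hR' : (R' : ℝ) = L * R + D := rfl
  have hint : ∫⁻ z, ballSupPow p R (f ∘ Ψ) z ≤ ∫⁻ z, ballSupPow p R' f z :=
    lintegral_ballSupPow_comp_le hT hTe fun z w hw => by
      rw [mem_closedBall_zero_iff] at hw ⊢
      exact (hΨ z w).trans (by rw [hR']; gcongr)
  -- `1 + (L R + D) ≤ (L + D) (1 + R)` since `L ≥ 1` and `D R ≥ 0`
  have hweight : ENNReal.ofReal (1 + R) ^ (-(κ / p)) ≤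
      ENNReal.ofReal ((L + D) ^ (κ / p)) * ENNReal.ofReal (1 + R') ^ (-(κ / p)) :=
    ENNReal.ofReal_rpow_neg_le_mul (by positivity) (by positivity)
      (by rw [hR']; nlinarith [R.2]) (by positivity)
  calc ENNReal.ofReal (1 + R) ^ (-(κ / p)) * (∫⁻ z, ballSupPow p R (f ∘ Ψ) z) ^ (1 / p)
      ≤ ENNReal.ofReal ((L + D) ^ (κ / p)) *
          (ENNReal.ofReal (1 + R') ^ (-(κ / p)) * (∫⁻ z, ballSupPow p R' f z) ^ (1 / p)) := by
        rw [← mul_assoc]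
        gcongr
    _ ≤ _ := by
        gcongr
        exact le_iSup (fun S : ℝ≥0 => ENNReal.ofReal (1 + S) ^ (-(κ / p)) *
          (∫⁻ z, ballSupPow p S f z) ^ (1 / p)) R'

section FreeFlow

variable {V : Type*} [NormedAddCommGroup V] [NormedSpace ℝ V]

theorem norm_freeFlow_le (t : ℝ) (w : V × V) : ‖(w.1 - t • w.2, w.2)‖ ≤ (1 + |t|) * ‖w‖ := by
  have h₁ := norm_fst_le w
  have h₂ := norm_snd_le w
  refine max_le ?_ (by nlinarith [abs_nonneg t, norm_nonneg w])
  calc ‖w.1 - t • w.2‖ ≤ ‖w.1‖ + |t| * ‖w.2‖ := by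
        simpa [norm_smul] using norm_sub_le w.1 (t • w.2)
    _ ≤ (1 + |t|) * ‖w‖ := by nlinarith [abs_nonneg t]

theorem norm_apply_add_sub_freeFlow_le {t D : ℝ} {Ψ : V × V → V × V}
    (hΨ : ∀ z : V × V, ‖Ψ z - (z.1 - t • z.2, z.2)‖ ≤ D) (z w : V × V) :
    ‖Ψ (z + w) - (z.1 - t • z.2, z.2)‖ ≤ (1 + |t|) * ‖w‖ + D := by
  have hsplit : Ψ (z + w) - (z.1 - t • z.2, z.2) =
      (Ψ (z + w) - ((z + w).1 - t • (z + w).2, (z + w).2)) + (w.1 - t • w.2, w.2) := by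
    ext <;> simp [smul_add] <;> abel
  rw [hsplit, add_comm _ D]
  exact (norm_add_le _ _).trans (add_le_add (hΨ (z + w)) (norm_freeFlow_le t w))

variable [MeasurableSpace V] [BorelSpace V] [SecondCountableTopology V]

def backwardFreeFlow (t : ℝ) : (V × V) ≃ᵐ (V × V) where
  toFun z := (z.1 - t • z.2, z.2)
  invFun z := (z.1 + t • z.2, z.2)
  left_inv z := by simp
  right_inv z := by simp
  measurable_toFun := by change Measurable fun z : V × V => (z.1 - t • z.2, z.2); fun_prop
  measurable_invFun := by change Measurable fun z : V × V => (z.1 + t • z.2, z.2); fun_prop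

theorem measurePreserving_backwardFreeFlow (μ : Measure V) [SFinite μ] [μ.IsAddRightInvariant]
    (t : ℝ) : MeasurePreserving (backwardFreeFlow t) (μ.prod μ) (μ.prod μ) := by
  have hshear : MeasurePreserving (fun z : V × V => (z.1, z.2 - t • z.1)) (μ.prod μ) (μ.prod μ) :=
    (MeasurePreserving.id μ).skew_product (by fun_prop)
      (ae_of_all _ fun v => (measurePreserving_sub_right μ (t • v)).map_eq)
  exact Measure.measurePreserving_swap.comp (hshear.comp Measure.measurePreserving_swap)

end FreeFlow

theorem statement18 (d : ℕ) (κ : ℝ) (hκ : 2 * (d : ℝ) ≤ κ)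
    (α : E d × E d → ℂ)
    (t D : ℝ) (ht : 0 ≤ t) (hD : 0 ≤ D)
    (Ψ : E d × E d → E d × E d)
    (hΨ : ∀ z : E d × E d, ‖Ψ z - (z.1 - t • z.2, z.2)‖ ≤ D) :
    Anorm κ 2 (α ∘ Ψ) ≤ ENNReal.ofReal ((1 + t + D) ^ (κ / 2)) * Anorm κ 2 α := by
  have hκ₀ : 0 ≤ κ := le_trans (by positivity) hκ
  have hflow : MeasurePreserving (backwardFreeFlow t : E d × E d → E d × E d) := by
    rw [Measure.volume_eq_prod]
    exact measurePreserving_backwardFreeFlow volume t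
  simpa only [abs_of_nonneg ht] using
    Anorm_comp_le_of_norm_sub_le hκ₀ zero_le_two (by linarith [abs_nonneg t]) hD α hflow
      (backwardFreeFlow t).measurableEmbedding (norm_apply_add_sub_freeFlow_le hΨ)
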